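/- arXiv:2106.16159 — 3 statements merged into one kernel-verified Lean document; each statement's English description precedes it below -/
import Mathlib

section
/- Let H be a real Hilbert space, f : H → ℝ a C² function, e : [t0,∞) → H a C¹ function, α ≥ 0 and β > 0, and t0 > 0. Then a function x : [t0,∞) → H is a (C²) solution of the perturbed explicit-Hessian system ẍ(t) + (α/t)ẋ(t) + β(∇²f(x(t))ẋ(t) + ė(t)) + ∇f(x(t)) + e(t) = 0 with initial conditions x(t0)=x0, ẋ(t0)=ẋ0 if and only if the pair (x,y) : [t0,∞) → H × H solves the first-order system ẋ(t) + β(∇f(x(t)) + e(t)) − (1/β − α/t)x(t) + (1/β)y(t) = 0 and ẏ(t) − (1/β − α/t + αβ/t²)x(t) + (1/β)y(t) = 0, with x(t0)=x0 and y(t0) = −β(ẋ0 + β∇f(x0)) + (1 − βα/t0)x0 − β²e(t0). -/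
open MeasureTheory Filter

/-- `g` is of class `C¹` on a set `s` (of times): differentiable at every point of `s`
with derivative continuous on `s`. -/
def IsC1On {H : Type*} [NormedAddCommGroup H] [NormedSpace ℝ H]
    (g : ℝ → H) (s : Set ℝ) : Prop :=
  (∀ t ∈ s, DifferentiableAt ℝ g t) ∧ ContinuousOn (deriv g) s

/-- `g` is of class `C²` on a set `s` of times. -/
def IsC2On {H : Type*} [NormedAddCommGroup H] [NormedSpace ℝ H]
    (g : ℝ → H) (s : Set ℝ) : Prop :=
  (∀ t ∈ s, DifferentiableAt ℝ g t) ∧ IsC1On (deriv g) s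

/-!
The new unknown is `y(t) = -β(ẋ + β∇f(x)) + (1 - βα/t)x - β²e`, chosen so that the
first-order equation for `x` is, up to the factor `β⁻¹`, the identity `y = y(x)`.
Differentiating this `y` gives `ẏ = (1/β - α/t + αβ/t²)x - β⁻¹y - β R`, where `R` is the
residual of (ISEHD-Pert); so, once `y = y(x)`, the equation for `ẏ` is equivalent to
`R = 0`, and the two initial conditions for `y(t0)` differ by `-β(ẋ(t0) - ẋ0)`.
-/

theorem ContDiff.differentiable_gradient {H : Type*} [NormedAddCommGroup H]
    [InnerProductSpace ℝ H] [CompleteSpace H] {f : H → ℝ} {n : WithTop ℕ∞}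
    (hf : ContDiff ℝ n f) (hn : 2 ≤ n) : Differentiable ℝ (gradient f) :=
  (InnerProductSpace.toDual ℝ H).symm.toContinuousLinearEquiv.differentiable.comp
    ((hf.fderiv_right (m := 1) hn).differentiable one_ne_zero)

theorem deriv_eq_of_eqOn {𝕜 F : Type*} [NontriviallyNormedField 𝕜] [NormedAddCommGroup F]
    [NormedSpace 𝕜 F] {g₁ g₂ : 𝕜 → F} {s : Set 𝕜} {t : 𝕜} (hs : UniqueDiffWithinAt 𝕜 s t)
    (ht : t ∈ s) (h : Set.EqOn g₁ g₂ s) (h₁ : DifferentiableAt 𝕜 g₁ t)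
    (h₂ : DifferentiableAt 𝕜 g₂ t) : deriv g₁ t = deriv g₂ t := by
  rw [← h₁.derivWithin hs, ← h₂.derivWithin hs]
  exact derivWithin_congr h (h ht)

namespace ISEHDPert

variable {H : Type*} [NormedAddCommGroup H] [InnerProductSpace ℝ H] [CompleteSpace H]
  (f : H → ℝ) (e x : ℝ → H) (α β : ℝ)

noncomputable def residual (t : ℝ) : H :=
  deriv (deriv x) t + (α / t) • deriv x t
    + β • (deriv (fun s => gradient f (x s)) t + deriv e t) + gradient f (x t) + e t

noncomputable def dualVar (t : ℝ) : H :=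
  -(β • (deriv x t + β • gradient f (x t))) + (1 - β * α / t) • x t - (β ^ 2) • e t

variable {f e x α β}

theorem firstEq_eq_smul_sub_dualVar (hβ : β ≠ 0) (t : ℝ) (y : H) :
    deriv x t + β • (gradient f (x t) + e t) - (1 / β - α / t) • x t + β⁻¹ • y
      = β⁻¹ • (y - dualVar f e x α β t) := by
  unfold dualVar
  match_scalars <;> field_simp

theorem hasDerivAt_dualVar (hβ : β ≠ 0) (hf : ContDiff ℝ 2 f) {t : ℝ} (ht : t ≠ 0)
    (hx : DifferentiableAt ℝ x t) (hx' : DifferentiableAt ℝ (deriv x) t)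
    (he : DifferentiableAt ℝ e t) :
    HasDerivAt (dualVar f e x α β)
      ((1 / β - α / t + α * β / t ^ 2) • x t - β⁻¹ • dualVar f e x α β t
        - β • residual f e x α β t) t := by
  have hgx : HasDerivAt (fun s => gradient f (x s)) (deriv (fun s => gradient f (x s)) t) t :=
    (hf.differentiable_gradient le_rfl (x t) |>.comp t hx).hasDerivAt
  have hcoeff : HasDerivAt (fun s : ℝ => 1 - β * α / s) (β * α / t ^ 2) t := by
    simpa [div_eq_mul_inv] using ((hasDerivAt_inv ht).const_mul (β * α)).const_sub 1
  refine (((hx'.hasDerivAt.add (hgx.const_smul β)).const_smul β).neg.add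
    (hcoeff.smul hx.hasDerivAt) |>.sub (he.hasDerivAt.const_smul (β ^ 2))).congr_deriv ?_
  unfold dualVar residual
  match_scalars <;> field_simp <;> ring

end ISEHDPert

open ISEHDPert in
theorem isehd_pert_first_order_equiv_general
    {H : Type*} [NormedAddCommGroup H] [InnerProductSpace ℝ H] [CompleteSpace H]
    (f : H → ℝ) (e x : ℝ → H) (t0 α β : ℝ) (x0 v0 : H)
    (ht0 : 0 < t0) (hβ : 0 < β)
    (hf : ContDiff ℝ 2 f)
    (he : IsC1On e (Set.Ici t0))
    (hx : IsC2On x (Set.Ici t0)) :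
    -- `x` solves (ISEHD-Pert) with the given Cauchy data
    (x t0 = x0 ∧ deriv x t0 = v0 ∧
      ∀ t, t0 ≤ t →
        deriv (deriv x) t + (α / t) • deriv x t
          + β • (deriv (fun s => gradient f (x s)) t + deriv e t)
          + gradient f (x t) + e t = 0)
    ↔
    -- `(x, y)` solves the first-order reformulation with the given Cauchy data
    (∃ y : ℝ → H, (∀ t, t0 ≤ t → DifferentiableAt ℝ y t) ∧
      x t0 = x0 ∧
      y t0 = -(β • (v0 + β • gradient f x0)) + (1 - β * α / t0) • x0 - (β ^ 2) • e t0 ∧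
      ∀ t, t0 ≤ t →
        (deriv x t + β • (gradient f (x t) + e t)
            - (1 / β - α / t) • x t + β⁻¹ • y t = 0 ∧
         deriv y t - (1 / β - α / t + α * β / t ^ 2) • x t + β⁻¹ • y t = 0)) := by
  have hβ0 : β ≠ 0 := hβ.ne'
  have hF : ∀ t, t0 ≤ t → HasDerivAt (dualVar f e x α β) _ t := fun t ht =>
    hasDerivAt_dualVar hβ0 hf (ht0.trans_le ht).ne' (hx.1 t ht) (hx.2.1 t ht) (he.1 t ht)
  constructor
  · rintro ⟨hx0, hv0, hR⟩
    refine ⟨dualVar f e x α β, fun t ht => (hF t ht).differentiableAt, hx0,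
      by rw [← hx0, ← hv0]; rfl, fun t ht => ⟨?_, ?_⟩⟩
    · rw [firstEq_eq_smul_sub_dualVar hβ0, sub_self, smul_zero]
    · rw [(hF t ht).deriv, show residual f e x α β t = 0 from hR t ht, smul_zero, sub_zero]
      abel
  · rintro ⟨y, hy, hx0, hy0, hsys⟩
    have hyF : Set.EqOn y (dualVar f e x α β) (Set.Ici t0) := fun t ht => by
      have h := (hsys t ht).1
      rwa [firstEq_eq_smul_sub_dualVar hβ0, smul_eq_zero_iff_right (inv_ne_zero hβ0),
        sub_eq_zero] at h
    refine ⟨hx0, ?_, fun t ht => ?_⟩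
    · rw [hyF Set.self_mem_Ici, dualVar, hx0] at hy0
      simpa [hβ0] using hy0
    · have h := (hsys t ht).2
      rw [deriv_eq_of_eqOn (uniqueDiffOn_Ici t0 t ht) ht hyF (hy t ht) (hF t ht).differentiableAt,
        (hF t ht).deriv, hyF ht] at h
      have hR : β • residual f e x α β t = 0 := by rw [← neg_eq_zero, ← h]; abel
      exact (smul_eq_zero_iff_right hβ0).mp hR

/-- Equivalence between the perturbed second-order system with explicit Hessian driven
damping (ISEHD-Pert) and its first-order (in time and space) reformulation. -/
theorem isehd_pert_first_order_equiv
    {H : Type*} [NormedAddCommGroup H] [InnerProductSpace ℝ H] [CompleteSpace H]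
    (f : H → ℝ) (e x : ℝ → H) (t0 α β : ℝ) (x0 v0 : H)
    (ht0 : 0 < t0) (hα : 0 ≤ α) (hβ : 0 < β)
    (hf : ContDiff ℝ 2 f)
    (he : IsC1On e (Set.Ici t0))
    (hx : IsC2On x (Set.Ici t0)) :
    -- `x` solves (ISEHD-Pert) with the given Cauchy data
    (x t0 = x0 ∧ deriv x t0 = v0 ∧
      ∀ t, t0 ≤ t →
        deriv (deriv x) t + (α / t) • deriv x t
          + β • (deriv (fun s => gradient f (x s)) t + deriv e t)
          + gradient f (x t) + e t = 0)
    ↔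
    -- `(x, y)` solves the first-order reformulation with the given Cauchy data
    (∃ y : ℝ → H, (∀ t, t0 ≤ t → DifferentiableAt ℝ y t) ∧
      x t0 = x0 ∧
      y t0 = -(β • (v0 + β • gradient f x0)) + (1 - β * α / t0) • x0 - (β ^ 2) • e t0 ∧
      ∀ t, t0 ≤ t →
        (deriv x t + β • (gradient f (x t) + e t)
            - (1 / β - α / t) • x t + β⁻¹ • y t = 0 ∧
         deriv y t - (1 / β - α / t + α * β / t ^ 2) • x t + β⁻¹ • y t = 0)) :=
  isehd_pert_first_order_equiv_general f e x t0 α β x0 v0 ht0 hβ hf he hx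
end

section
/- Let H be a real Hilbert space, f : H → ℝ a convex C² function with a minimizer x⋆, and e : [t0,∞) → H a C¹ function with ∫_{t0}^∞ t‖e(t)‖ dt < ∞ and ∫_{t0}^∞ t‖ė(t)‖ dt < ∞. Let α > 3, β > 0, and let x : [t0,∞) → H be a solution of ẍ(t) + (α/t)ẋ(t) + β(∇²f(x(t))ẋ(t) + ė(t)) + ∇f(x(t)) + e(t) = 0. Define v(t) = (α−1)(x(t) − x⋆) + t(ẋ(t) + β∇f(x(t))). Then sup_{t ≥ t0} ‖v(t)‖ < ∞, and moreover the trajectory x is bounded: sup_{t ≥ t0} ‖x(t)‖ < ∞. -/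
/-!
By the equation of motion, the anchored momentum `v` has derivative
`v' = -(t - β) ∇f(x) - t (e + β ė)`. For the energy `ℰ = 2 t (t - β) (f x - f x⋆) + ‖v‖²`,
convexity (`f x - f x⋆ ≤ ⟪x - x⋆, ∇f x⟫`) and `α > 3` then give `ℰ' ≤ 2 t ‖e + β ė‖ ‖v‖` for
large `t`, so `√(ℰ + 1)` grows by at most `∫ t (‖e‖ + β ‖ė‖) < ∞` and `v` is bounded.
Finally `⟪x - x⋆, ∇f x⟫ ≥ 0` turns `‖v‖ ≤ M` into `⟪x - x⋆, (α - 1)(x - x⋆) + t ẋ⟫ ≤ M ‖x - x⋆‖`,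
hence `(t ‖x - x⋆‖²)' ≤ M²`, which bounds `x`.
-/

open MeasureTheory Filter InnerProductSpace Set

section

variable {H : Type*} [NormedAddCommGroup H] [InnerProductSpace ℝ H]

theorem ConvexOn.map_sub_le_sub_of_hasFDerivAt {E : Type*} [NormedAddCommGroup E] [NormedSpace ℝ E]
    {S : Set E} {f : E → ℝ} {f' : E →L[ℝ] ℝ} {a b : E} (hfc : ConvexOn ℝ S f) (ha : a ∈ S)
    (hb : b ∈ S) (hf : HasFDerivAt f f' a) : f' (b - a) ≤ f b - f a := by
  have hline := hfc.comp_affineMap (AffineMap.lineMap (k := ℝ) a b)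
  have hderiv : HasDerivAt (f ∘ AffineMap.lineMap (k := ℝ) a b) (f' (b - a)) 0 := by
    refine HasFDerivAt.comp_hasDerivAt (0 : ℝ) ?_ AffineMap.hasDerivAt_lineMap
    simpa using hf
  simpa [slope] using
    hline.le_slope_of_hasDerivAt (x := 0) (y := 1) (by simpa) (by simpa) one_pos hderiv

theorem sqrt_le_sqrt_add_integral_of_hasDerivAt_le {E h : ℝ → ℝ} {a : ℝ}
    (hE : ∀ t, a ≤ t → ∃ E', HasDerivAt E E' t ∧ E' ≤ 2 * h t * √(E t))
    (hpos : ∀ t, a ≤ t → 0 < E t) (h0 : ∀ t, a ≤ t → 0 ≤ h t)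
    (hint : IntegrableOn h (Ici a)) {t : ℝ} (ht : a ≤ t) :
    √(E t) ≤ √(E a) + ∫ s in Ici a, h s := by
  choose! E' hE' hle using hE
  have hsqrt : ∀ s, a ≤ s → HasDerivAt (fun s => √(E s)) (E' s / (2 * √(E s))) s :=
    fun s hs => (hE' s hs).sqrt (hpos s hs).ne'
  have hFTC : √(E t) - √(E a) ≤ ∫ s in a..t, h s := by
    refine intervalIntegral.sub_le_integral_of_hasDeriv_right_of_le ht
      (fun s hs => (hsqrt s hs.1).continuousAt.continuousWithinAt)
      (fun s hs => (hsqrt s hs.1.le).hasDerivWithinAt) (hint.mono_set Icc_subset_Ici_self)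
      fun s hs => ?_
    have hroot : 0 < √(E s) := Real.sqrt_pos.2 (hpos s hs.1.le)
    rw [div_le_iff₀ (by positivity)]
    linarith [hle s hs.1.le]
  have htail : ∫ s in a..t, h s ≤ ∫ s in Ici a, h s := by
    rw [intervalIntegral.integral_of_le ht]
    exact setIntegral_mono_set hint ((ae_restrict_iff' measurableSet_Ici).2 (.of_forall h0))
      (Ioc_subset_Icc_self.trans Icc_subset_Ici_self).eventuallyLE
  linarith

theorem norm_sq_le_of_inner_smul_add_smul_le {u u' : ℝ → H} {t₀ c M : ℝ} (ht₀ : 0 < t₀)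
    (hc : 1 ≤ c) (hu : ∀ t, t₀ ≤ t → HasDerivAt u (u' t) t)
    (hbound : ∀ t, t₀ ≤ t → ⟪u t, c • u t + t • u' t⟫_ℝ ≤ M * ‖u t‖) {t : ℝ} (ht : t₀ ≤ t) :
    ‖u t‖ ^ 2 ≤ ‖u t₀‖ ^ 2 + M ^ 2 := by
  have hψ : ∀ s, t₀ ≤ s →
      HasDerivAt (fun s => s * ‖u s‖ ^ 2) (1 * ‖u s‖ ^ 2 + s * (2 * ⟪u s, u' s⟫_ℝ)) s :=
    fun s hs => (hasDerivAt_id s).mul (hu s hs).norm_sq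
  have hrate : ∀ s, t₀ ≤ s → 1 * ‖u s‖ ^ 2 + s * (2 * ⟪u s, u' s⟫_ℝ) ≤ M ^ 2 := by
    intro s hs
    have h := hbound s hs
    rw [inner_add_right, real_inner_smul_right, real_inner_smul_right,
      real_inner_self_eq_norm_sq] at h
    nlinarith [sq_nonneg (M - ‖u s‖), sq_nonneg ‖u s‖]
  have hFTC : t * ‖u t‖ ^ 2 - t₀ * ‖u t₀‖ ^ 2 ≤ ∫ _ in t₀..t, M ^ 2 :=
    intervalIntegral.sub_le_integral_of_hasDeriv_right_of_le ht
      (fun s hs => (hψ s hs.1).continuousAt.continuousWithinAt)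
      (fun s hs => (hψ s hs.1.le).hasDerivWithinAt) (integrableOn_const measure_Icc_lt_top.ne)
      fun s hs => hrate s hs.1.le
  rw [intervalIntegral.integral_const, smul_eq_mul] at hFTC
  have htpos : 0 < t := ht₀.trans_le ht
  have : t * ‖u t‖ ^ 2 ≤ t * (‖u t₀‖ ^ 2 + M ^ 2) := by
    nlinarith [mul_le_mul_of_nonneg_right ht (sq_nonneg ‖u t₀‖), sq_nonneg M]
  exact le_of_mul_le_mul_left this htpos

noncomputable def momentum (x g : ℝ → H) (xstar : H) (α β t : ℝ) : H :=
  (α - 1) • (x t - xstar) + t • (deriv x t + β • g t)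

theorem hasDerivAt_momentum {x g e : ℝ → H} {xstar : H} {α β t : ℝ} (ht : t ≠ 0)
    (hx : DifferentiableAt ℝ x t) (hx' : DifferentiableAt ℝ (deriv x) t)
    (hg : DifferentiableAt ℝ g t)
    (hsol : deriv (deriv x) t + (α / t) • deriv x t + β • (deriv g t + deriv e t)
      + g t + e t = 0) :
    HasDerivAt (momentum x g xstar α β) (-((t - β) • g t) - t • (e t + β • deriv e t)) t := by
  have hderiv : HasDerivAt (momentum x g xstar α β) ((α - 1) • deriv x t
      + (t • (deriv (deriv x) t + β • deriv g t) + (1 : ℝ) • (deriv x t + β • g t))) t :=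
    ((hx.hasDerivAt.sub_const xstar).const_smul (α - 1)).add
      ((hasDerivAt_id t).smul (hx'.hasDerivAt.add (hg.hasDerivAt.const_smul β)))
  refine hderiv.congr_deriv ?_
  have hacc : deriv (deriv x) t + β • deriv g t
      = -((α / t) • deriv x t) - β • deriv e t - g t - e t := by
    rw [smul_add] at hsol
    linear_combination (norm := module) hsol
  rw [hacc]
  match_scalars <;> field_simp <;> ring

-- Half of the derivative of `lyapunovEnergy`, with `u = x t - xstar`, `d = ẋ t`,
-- `G = ∇f (x t)`, `W = e t + β ė t` and `V` the momentum.
theorem lyapunov_dissipation_le {u d G W V : H} {g α β t : ℝ} (hα : 3 < α) (hβ : 0 ≤ β)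
    (ht : (α - 2) * β ≤ (α - 3) * t) (hg : 0 ≤ g) (hgu : g ≤ ⟪u, G⟫_ℝ)
    (hV : V = (α - 1) • u + t • (d + β • G)) :
    (2 * t - β) * g + t * (t - β) * ⟪G, d⟫_ℝ + ⟪V, -((t - β) • G) - t • W⟫_ℝ
      ≤ t * ‖W‖ * ‖V‖ := by
  have htβ : β ≤ t := by nlinarith
  have hVG : ⟪V, G⟫_ℝ = (α - 1) * ⟪u, G⟫_ℝ + t * ⟪G, d⟫_ℝ + t * β * ‖G‖ ^ 2 := by
    rw [hV]
    simp only [inner_add_left, real_inner_smul_left]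
    rw [real_inner_comm G d, real_inner_self_eq_norm_sq]
    ring
  have hcoerc : (2 * t - β) * g - (t - β) * (α - 1) * ⟪u, G⟫_ℝ ≤ 0 := by
    nlinarith [mul_le_mul_of_nonneg_left hgu (by nlinarith : 0 ≤ (t - β) * (α - 1))]
  have hW : -⟪V, W⟫_ℝ ≤ ‖W‖ * ‖V‖ := by
    linarith [neg_abs_le ⟪V, W⟫_ℝ, abs_real_inner_le_norm V W, mul_comm ‖W‖ ‖V‖]
  rw [inner_sub_right, inner_neg_right, real_inner_smul_right, real_inner_smul_right, hVG]
  nlinarith [mul_nonneg (mul_nonneg (by linarith : 0 ≤ t) (sub_nonneg.2 htβ)) hβ,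
    sq_nonneg ‖G‖, mul_le_mul_of_nonneg_left hW (by linarith : 0 ≤ t)]

variable [CompleteSpace H]

theorem ContDiff.differentiable_gradient_s5 {f : H → ℝ} (hf : ContDiff ℝ 2 f) :
    Differentiable ℝ (gradient f) :=
  (toDual ℝ H).symm.toContinuousLinearEquiv.differentiable.comp
    ((hf.fderiv_right (m := 1) le_rfl).differentiable one_ne_zero)

theorem ConvexOn.sub_le_inner_gradient {f : H → ℝ} {a : H} (hfc : ConvexOn ℝ univ f)
    (hf : DifferentiableAt ℝ f a) (b : H) : f a - f b ≤ ⟪a - b, gradient f a⟫_ℝ := by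
  have h := hfc.map_sub_le_sub_of_hasFDerivAt (mem_univ a) (mem_univ b) hf.hasFDerivAt
  rw [← inner_gradient_left, ← neg_sub a b, inner_neg_right, real_inner_comm] at h
  linarith

noncomputable def lyapunovEnergy (f : H → ℝ) (x : ℝ → H) (xstar : H) (α β t : ℝ) : ℝ :=
  2 * t * (t - β) * (f (x t) - f xstar)
    + ‖momentum x (fun s => gradient f (x s)) xstar α β t‖ ^ 2

theorem sq_norm_momentum_le_lyapunovEnergy {f : H → ℝ} {x : ℝ → H} {xstar : H} {α β t : ℝ}
    (hmin : ∀ z, f xstar ≤ f z) (ht : 0 ≤ t) (htβ : β ≤ t) :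
    ‖momentum x (fun s => gradient f (x s)) xstar α β t‖ ^ 2 ≤ lyapunovEnergy f x xstar α β t := by
  have := mul_nonneg (mul_nonneg ht (sub_nonneg.2 htβ)) (sub_nonneg.2 (hmin (x t)))
  unfold lyapunovEnergy
  linarith

theorem norm_momentum_le_sqrt_lyapunovEnergy_add_one {f : H → ℝ} {x : ℝ → H} {xstar : H}
    {α β t : ℝ} (hmin : ∀ z, f xstar ≤ f z) (ht : 0 ≤ t) (htβ : β ≤ t) :
    ‖momentum x (fun s => gradient f (x s)) xstar α β t‖
      ≤ √(lyapunovEnergy f x xstar α β t + 1) :=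
  Real.le_sqrt_of_sq_le (by linarith [sq_norm_momentum_le_lyapunovEnergy (x := x) (α := α) hmin ht htβ])

theorem inner_sub_le_norm_momentum_mul {f : H → ℝ} {x : ℝ → H} {xstar : H} {α β t : ℝ}
    (hfc : ConvexOn ℝ univ f) (hmin : ∀ z, f xstar ≤ f z) (hβ : 0 ≤ β) (ht : 0 ≤ t)
    (hf : DifferentiableAt ℝ f (x t)) :
    ⟪x t - xstar, (α - 1) • (x t - xstar) + t • deriv x t⟫_ℝ
      ≤ ‖momentum x (fun s => gradient f (x s)) xstar α β t‖ * ‖x t - xstar‖ := by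
  have hG : 0 ≤ ⟪x t - xstar, gradient f (x t)⟫_ℝ :=
    (sub_nonneg.2 (hmin _)).trans (hfc.sub_le_inner_gradient hf xstar)
  have hsplit : ⟪x t - xstar, momentum x (fun s => gradient f (x s)) xstar α β t⟫_ℝ
      = ⟪x t - xstar, (α - 1) • (x t - xstar) + t • deriv x t⟫_ℝ
        + t * β * ⟪x t - xstar, gradient f (x t)⟫_ℝ := by
    simp only [momentum, smul_add, inner_add_right, real_inner_smul_right]
    ring
  nlinarith [real_inner_le_norm (x t - xstar) (momentum x (fun s => gradient f (x s)) xstar α β t),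
    mul_nonneg (mul_nonneg ht hβ) hG]

theorem exists_hasDerivAt_lyapunovEnergy_le {f : H → ℝ} {e x : ℝ → H} {xstar : H} {α β t : ℝ}
    (hfc : ConvexOn ℝ univ f) (hmin : ∀ z, f xstar ≤ f z) (hα : 3 < α) (hβ : 0 < β)
    (ht : (α - 2) * β ≤ (α - 3) * t) (hf : DifferentiableAt ℝ f (x t))
    (hgrad : DifferentiableAt ℝ (gradient f) (x t))
    (hx : DifferentiableAt ℝ x t) (hx' : DifferentiableAt ℝ (deriv x) t)
    (hsol : deriv (deriv x) t + (α / t) • deriv x t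
        + β • (deriv (fun s => gradient f (x s)) t + deriv e t)
        + gradient f (x t) + e t = 0) :
    ∃ E', HasDerivAt (lyapunovEnergy f x xstar α β) E' t ∧
      E' ≤ 2 * (t * ‖e t‖ + β * (t * ‖deriv e t‖)) * √(lyapunovEnergy f x xstar α β t + 1) := by
  have htpos : 0 < t := by nlinarith
  have htβ : β ≤ t := by nlinarith
  set V := momentum x (fun s => gradient f (x s)) xstar α β
  have hV : HasDerivAt V (-((t - β) • gradient f (x t)) - t • (e t + β • deriv e t)) t :=
    hasDerivAt_momentum htpos.ne' hx hx' (hgrad.comp t hx) hsol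
  have hfx : HasDerivAt (fun s => f (x s)) ⟪gradient f (x t), deriv x t⟫_ℝ t := by
    rw [inner_gradient_left]
    exact hf.hasFDerivAt.comp_hasDerivAt t hx.hasDerivAt
  have hE : HasDerivAt (lyapunovEnergy f x xstar α β)
      ((2 * 1 * (t - β) + 2 * t * 1) * (f (x t) - f xstar)
        + 2 * t * (t - β) * ⟪gradient f (x t), deriv x t⟫_ℝ
        + 2 * ⟪V t, -((t - β) • gradient f (x t)) - t • (e t + β • deriv e t)⟫_ℝ) t :=
    ((((hasDerivAt_id' t).const_mul 2).mul ((hasDerivAt_id' t).sub_const β)).mul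
      (hfx.sub_const (f xstar))).add hV.norm_sq
  refine ⟨_, hE, ?_⟩
  have hdiss := lyapunov_dissipation_le (d := deriv x t) (W := e t + β • deriv e t) (V := V t)
    hα hβ.le ht (sub_nonneg.2 (hmin _)) (hfc.sub_le_inner_gradient hf xstar) rfl
  have hW : t * ‖e t + β • deriv e t‖ ≤ t * ‖e t‖ + β * (t * ‖deriv e t‖) := by
    have := norm_add_le (e t) (β • deriv e t)
    rw [norm_smul, Real.norm_of_nonneg hβ.le] at this
    nlinarith
  have hVsqrt : ‖V t‖ ≤ √(lyapunovEnergy f x xstar α β t + 1) :=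
    norm_momentum_le_sqrt_lyapunovEnergy_add_one hmin htpos.le htβ
  nlinarith [mul_le_mul hW hVsqrt (norm_nonneg _)
    (by positivity : 0 ≤ t * ‖e t‖ + β * (t * ‖deriv e t‖))]

theorem exists_norm_momentum_le {f : H → ℝ} {e x : ℝ → H} {xstar : H} {t₀ α β : ℝ}
    (ht₀ : 0 < t₀) (hα : 3 < α) (hβ : 0 < β) (hf : Differentiable ℝ f)
    (hgrad : Differentiable ℝ (gradient f)) (hfc : ConvexOn ℝ univ f)
    (hmin : ∀ z, f xstar ≤ f z)
    (heint : IntegrableOn (fun t => t * ‖e t‖) (Ici t₀))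
    (heint' : IntegrableOn (fun t => t * ‖deriv e t‖) (Ici t₀))
    (hx : ∀ t, t₀ ≤ t → DifferentiableAt ℝ x t)
    (hx' : ∀ t, t₀ ≤ t → DifferentiableAt ℝ (deriv x) t)
    (hsol : ∀ t, t₀ ≤ t →
      deriv (deriv x) t + (α / t) • deriv x t
        + β • (deriv (fun s => gradient f (x s)) t + deriv e t)
        + gradient f (x t) + e t = 0) :
    ∃ M, ∀ t, t₀ ≤ t → ‖momentum x (fun s => gradient f (x s)) xstar α β t‖ ≤ M := by
  set V := momentum x (fun s => gradient f (x s)) xstar α β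
  set E := lyapunovEnergy f x xstar α β
  set h : ℝ → ℝ := fun t => t * ‖e t‖ + β * (t * ‖deriv e t‖)
  -- from `t₁` on, the coefficient `(3 - α) t + (α - 2) β` of `f (x t) - f xstar` in `E'` is `≤ 0`
  set t₁ := max t₀ ((α - 2) * β / (α - 3))
  have ht₀t : ∀ t, t₁ ≤ t → t₀ ≤ t := fun t ht => (le_max_left _ _).trans ht
  have hthr : ∀ t, t₁ ≤ t → (α - 2) * β ≤ (α - 3) * t := fun t ht =>
    (div_le_iff₀' (by linarith)).1 ((le_max_right _ _).trans ht)
  have ht₁pos : ∀ t, t₁ ≤ t → 0 < t := fun t ht => ht₀.trans_le (ht₀t t ht)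
  have hβt : ∀ t, t₁ ≤ t → β ≤ t := fun t ht => by nlinarith [hthr t ht]
  have hEpos : ∀ t, t₁ ≤ t → 0 < E t + 1 := fun t ht => by
    nlinarith [sq_norm_momentum_le_lyapunovEnergy (x := x) (α := α) hmin (ht₁pos t ht).le
      (hβt t ht)]
  have hdiss : ∀ t, t₁ ≤ t →
      ∃ E', HasDerivAt (fun s => E s + 1) E' t ∧ E' ≤ 2 * h t * √(E t + 1) := fun t ht =>
    let ⟨E', hE', hle⟩ := exists_hasDerivAt_lyapunovEnergy_le hfc hmin hα hβ (hthr t ht)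
      (hf _) (hgrad _) (hx t (ht₀t t ht)) (hx' t (ht₀t t ht)) (hsol t (ht₀t t ht))
    ⟨E', hE'.add_const 1, hle⟩
  have hint : IntegrableOn h (Ici t₁) :=
    (heint.add (heint'.const_mul β)).mono_set (Ici_subset_Ici.2 (le_max_left _ _))
  have hh0 : ∀ t, t₁ ≤ t → 0 ≤ h t := fun t ht => by
    have := ht₁pos t ht
    positivity
  obtain ⟨C, hC⟩ := isCompact_Icc.exists_bound_of_continuousOn (f := V) fun t ht =>
    (hasDerivAt_momentum (ht₀.trans_le ht.1).ne' (hx t ht.1) (hx' t ht.1)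
      ((hgrad _).comp t (hx t ht.1)) (hsol t ht.1)).continuousAt.continuousWithinAt
  refine ⟨max C (√(E t₁ + 1) + ∫ s in Ici t₁, h s), fun t ht => ?_⟩
  rcases le_total t t₁ with htt₁ | ht₁t
  · exact (hC t ⟨ht, htt₁⟩).trans (le_max_left _ _)
  · calc ‖V t‖ ≤ √(E t + 1) :=
          norm_momentum_le_sqrt_lyapunovEnergy_add_one hmin (ht₁pos t ht₁t).le (hβt t ht₁t)
      _ ≤ √(E t₁ + 1) + ∫ s in Ici t₁, h s :=
          sqrt_le_sqrt_add_integral_of_hasDerivAt_le hdiss hEpos hh0 hint ht₁t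
      _ ≤ _ := le_max_right _ _

end

theorem isehd_pert_bounded_v_and_trajectory_general
    {H : Type*} [NormedAddCommGroup H] [InnerProductSpace ℝ H] [CompleteSpace H]
    (f : H → ℝ) (e x : ℝ → H) (xstar : H) (t0 α β : ℝ)
    (ht0 : 0 < t0) (hα : 3 < α) (hβ : 0 < β)
    (hf : ContDiff ℝ 2 f) (hconv : ConvexOn ℝ Set.univ f)
    (hmin : ∀ z, f xstar ≤ f z)
    (heint : IntegrableOn (fun t => t * ‖e t‖) (Set.Ici t0))
    (heint' : IntegrableOn (fun t => t * ‖deriv e t‖) (Set.Ici t0))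
    (hx1 : ∀ t, t0 ≤ t → DifferentiableAt ℝ x t)
    (hx2 : ∀ t, t0 ≤ t → DifferentiableAt ℝ (deriv x) t)
    (hsol : ∀ t, t0 ≤ t →
      deriv (deriv x) t + (α / t) • deriv x t
        + β • (deriv (fun s => gradient f (x s)) t + deriv e t)
        + gradient f (x t) + e t = 0) :
    (∃ M : ℝ, ∀ t, t0 ≤ t →
      ‖(α - 1) • (x t - xstar) + t • (deriv x t + β • gradient f (x t))‖ ≤ M) ∧
    (∃ M : ℝ, ∀ t, t0 ≤ t → ‖x t‖ ≤ M) := by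
  have hfd : Differentiable ℝ f := hf.differentiable two_ne_zero
  obtain ⟨M, hM⟩ := exists_norm_momentum_le ht0 hα hβ hfd hf.differentiable_gradient_s5 hconv hmin
    heint heint' hx1 hx2 hsol
  refine ⟨⟨M, hM⟩, ‖xstar‖ + √(‖x t0 - xstar‖ ^ 2 + M ^ 2), fun t ht => ?_⟩
  have hinner : ∀ s, t0 ≤ s →
      ⟪x s - xstar, (α - 1) • (x s - xstar) + s • deriv x s⟫_ℝ ≤ M * ‖x s - xstar‖ :=
    fun s hs => (inner_sub_le_norm_momentum_mul hconv hmin hβ.le (ht0.trans_le hs).le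
      (hfd _)).trans (mul_le_mul_of_nonneg_right (hM s hs) (norm_nonneg _))
  have hdist := norm_sq_le_of_inner_smul_add_smul_le (u := fun s => x s - xstar) ht0
    (by linarith) (fun s hs => (hx1 s hs).hasDerivAt.sub_const xstar) hinner ht
  calc ‖x t‖ ≤ ‖xstar‖ + ‖x t - xstar‖ := norm_le_norm_add_norm_sub' (x t) xstar
    _ ≤ ‖xstar‖ + √(‖x t0 - xstar‖ ^ 2 + M ^ 2) := by gcongr; exact Real.le_sqrt_of_sq_le hdist

/-- Boundedness of the anchored momentum `v(t) = (α−1)(x(t)−x⋆) + t(ẋ(t) + β∇f(x(t)))`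
and of the trajectory, for the perturbed inertial system with explicit Hessian driven
damping (ISEHD-Pert). -/
theorem isehd_pert_bounded_v_and_trajectory
    {H : Type*} [NormedAddCommGroup H] [InnerProductSpace ℝ H] [CompleteSpace H]
    (f : H → ℝ) (e x : ℝ → H) (xstar : H) (t0 α β : ℝ)
    (ht0 : 0 < t0) (hα : 3 < α) (hβ : 0 < β)
    (hf : ContDiff ℝ 2 f) (hconv : ConvexOn ℝ Set.univ f)
    (hmin : ∀ z, f xstar ≤ f z)
    (he1 : ∀ t, t0 ≤ t → DifferentiableAt ℝ e t)
    (he2 : ContinuousOn (deriv e) (Set.Ici t0))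
    (heint : IntegrableOn (fun t => t * ‖e t‖) (Set.Ici t0))
    (heint' : IntegrableOn (fun t => t * ‖deriv e t‖) (Set.Ici t0))
    (hx1 : ∀ t, t0 ≤ t → DifferentiableAt ℝ x t)
    (hx2 : ∀ t, t0 ≤ t → DifferentiableAt ℝ (deriv x) t)
    (hsol : ∀ t, t0 ≤ t →
      deriv (deriv x) t + (α / t) • deriv x t
        + β • (deriv (fun s => gradient f (x s)) t + deriv e t)
        + gradient f (x t) + e t = 0) :
    (∃ M : ℝ, ∀ t, t0 ≤ t →
      ‖(α - 1) • (x t - xstar) + t • (deriv x t + β • gradient f (x t))‖ ≤ M) ∧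
    (∃ M : ℝ, ∀ t, t0 ≤ t → ‖x t‖ ≤ M) :=
  isehd_pert_bounded_v_and_trajectory_general f e x xstar t0 α β ht0 hα hβ hf hconv hmin heint
    heint' hx1 hx2 hsol
end

section
/- Let t0 > 0, let f : [t0,∞) → ℝ be continuous and integrable on [t0,∞), and let φ : [t0,∞) → [0,∞) be nondecreasing with φ(t) → +∞ as t → ∞. Then (1/φ(t)) ∫_{t0}^t φ(s) f(s) ds → 0 as t → ∞. -/
open MeasureTheory Filter Set Topology

/-! Abel summation in integral form. On `[T, t]` write `φ s = ∫₀^{φ t} 1[y < φ s] dy` and swap the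
integrals: `∫_T^t φ f` becomes an integral over `y ∈ (0, φ t)` of integrals of `f` over the sets
`{s ∈ (T, t] | y < φ s}`. As `φ` is monotone these are, up to a null set, intervals `(u, t]`, so
`|∫_T^t φ f| ≤ φ t · sup_{u ≥ T} |∫_u^t f|`, which is small compared with `φ t` once `T` is large
because `f` is integrable; the remaining integral over `[t0, T]` is a constant, swamped by
`φ t → ∞`. -/

lemma IsUpperSet.exists_inter_Ioc_ae_eq {U : Set ℝ} (hU : IsUpperSet U) {a b : ℝ} (hab : a ≤ b)
    (hb : b ∈ U) : ∃ u ∈ Icc a b, (Ioc a b ∩ U : Set ℝ) =ᵐ[volume] Ioc u b := by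
  set S := Icc a b ∩ U
  have hS : S.Nonempty := ⟨b, ⟨hab, le_rfl⟩, hb⟩
  have hSbdd : BddBelow S := ⟨a, fun x hx => hx.1.1⟩
  refine ⟨sInf S, ⟨le_csInf hS fun x hx => hx.1.1, csInf_le hSbdd ⟨⟨hab, le_rfl⟩, hb⟩⟩, ?_⟩
  have hlower : Ioc (sInf S) b ⊆ Ioc a b ∩ U := by
    rintro x ⟨hx, hxb⟩
    obtain ⟨z, ⟨⟨haz, -⟩, hzU⟩, hzx⟩ := exists_lt_of_csInf_lt hS hx
    exact ⟨⟨haz.trans_lt hzx, hxb⟩, hU hzx.le hzU⟩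
  have hupper : Ioc a b ∩ U ⊆ Icc (sInf S) b := fun x hx =>
    ⟨csInf_le hSbdd ⟨Ioc_subset_Icc_self hx.1, hx.2⟩, hx.1.2⟩
  exact (hupper.eventuallyLE.trans Ioc_ae_eq_Icc.symm.le).antisymm hlower.eventuallyLE

lemma abs_setIntegral_Ioc_inter_le_of_isUpperSet {f : ℝ → ℝ} {U : Set ℝ} (hU : IsUpperSet U)
    {a b ε : ℝ} (hab : a ≤ b) (hb : b ∈ U) (htail : ∀ u ∈ Icc a b, |∫ s in u..b, f s| ≤ ε) :
    |∫ s in Ioc a b ∩ U, f s| ≤ ε := by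
  obtain ⟨u, hu, hae⟩ := hU.exists_inter_Ioc_ae_eq hab hb
  rw [setIntegral_congr_set hae, ← intervalIntegral.integral_of_le hu.2]
  exact htail u hu

theorem abs_intervalIntegral_mul_le_of_monotone {φ f : ℝ → ℝ} {a b ε : ℝ} (hφ : Monotone φ)
    (hφa : 0 ≤ φ a) (hab : a ≤ b) (hf : IntegrableOn f (Ioc a b))
    (htail : ∀ u ∈ Icc a b, |∫ s in u..b, f s| ≤ ε) :
    |∫ s in a..b, φ s * f s| ≤ ε * φ b := by
  set g : ℝ → ℝ → ℝ := fun s y => {p : ℝ × ℝ | p.2 < φ p.1}.indicator (fun p => f p.1) (s, y)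
  have hg : Integrable (Function.uncurry g)
      ((volume.restrict (Ioc a b)).prod (volume.restrict (Ioo 0 (φ b)))) :=
    (hf.comp_fst _).indicator (measurableSet_lt measurable_snd (hφ.measurable.comp measurable_fst))
  have hslice : ∀ s ∈ Ioc a b, ∫ y in Ioo 0 (φ b), g s y = φ s * f s := by
    intro s hs
    have hcut : Ioo 0 (φ b) ∩ Iio (φ s) = Ioo 0 (φ s) := by
      rw [Ioo_inter_Iio, min_eq_right (hφ hs.2)]
    calc ∫ y in Ioo 0 (φ b), g s y = ∫ y in Ioo 0 (φ b), (Iio (φ s)).indicator (fun _ => f s) y :=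
          rfl
      _ = φ s * f s := by
        rw [setIntegral_indicator measurableSet_Iio, hcut, setIntegral_const,
          Real.volume_real_Ioo_of_le (hφa.trans (hφ hs.1.le)), sub_zero, smul_eq_mul]
  have hinner : ∀ y ∈ Ioo 0 (φ b), ‖∫ s in Ioc a b, g s y‖ ≤ ε := by
    intro y hy
    have hslab := abs_setIntegral_Ioc_inter_le_of_isUpperSet (f := f) (U := {s | y < φ s})
      (fun x z hxz hx => hx.trans_le (hφ hxz)) hab hy.2 htail
    calc ‖∫ s in Ioc a b, g s y‖ = |∫ s in Ioc a b, {s | y < φ s}.indicator f s| := rfl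
      _ ≤ ε := by
        rwa [setIntegral_indicator (measurableSet_lt measurable_const hφ.measurable)]
  calc |∫ s in a..b, φ s * f s|
      = ‖∫ s in Ioc a b, ∫ y in Ioo 0 (φ b), g s y‖ := by
        rw [intervalIntegral.integral_of_le hab, setIntegral_congr_fun measurableSet_Ioc hslice,
          Real.norm_eq_abs]
    _ = ‖∫ y in Ioo 0 (φ b), ∫ s in Ioc a b, g s y‖ := by rw [integral_integral_swap hg]
    _ ≤ ε * volume.real (Ioo 0 (φ b)) :=
        norm_setIntegral_le_of_norm_le_const measure_Ioo_lt_top hinner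
    _ = ε * φ b := by simp [hφa.trans (hφ hab)]

theorem abs_intervalIntegral_mul_le_of_monotoneOn {φ f : ℝ → ℝ} {a b ε : ℝ}
    (hφ : MonotoneOn φ (Icc a b)) (hφa : 0 ≤ φ a) (hab : a ≤ b) (hf : IntegrableOn f (Ioc a b))
    (htail : ∀ u ∈ Icc a b, |∫ s in u..b, f s| ≤ ε) :
    |∫ s in a..b, φ s * f s| ≤ ε * φ b := by
  set ψ := IccExtend hab fun x : Icc a b => φ x
  have hψφ : ∀ x ∈ Icc a b, ψ x = φ x := fun x hx => IccExtend_of_mem hab _ hx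
  have hψ := abs_intervalIntegral_mul_le_of_monotone (φ := ψ)
    ((monotoneOn_iff_monotone.1 hφ).IccExtend hab)
    (by rwa [hψφ a (left_mem_Icc.2 hab)]) hab hf htail
  have hψφ_int : ∫ s in a..b, ψ s * f s = ∫ s in a..b, φ s * f s :=
    intervalIntegral.integral_congr fun x hx => by
      rw [uIcc_of_le hab] at hx
      rw [hψφ x hx]
  rwa [hψφ b (right_mem_Icc.2 hab), hψφ_int] at hψ

lemma MonotoneOn.intervalIntegrable_mul {φ f : ℝ → ℝ} {a b : ℝ} (hφ : MonotoneOn φ (uIcc a b))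
    (hf : IntegrableOn f (uIcc a b)) : IntervalIntegrable (fun s => φ s * f s) volume a b :=
  IntegrableOn.intervalIntegrable (hf.mul_of_top_right (hφ.memLp_isCompact isCompact_uIcc))

lemma IntegrableOn.eventually_forall_abs_intervalIntegral_lt {f : ℝ → ℝ} {a δ : ℝ}
    (hf : IntegrableOn f (Ici a)) (hδ : 0 < δ) :
    ∀ᶠ T in atTop, ∀ u ≥ T, ∀ v ≥ T, |∫ s in u..v, f s| < δ := by
  obtain ⟨N, hN⟩ := Metric.cauchySeq_iff.1
    (intervalIntegral_tendsto_integral_Ioi a (hf.mono_set Ioi_subset_Ici_self) tendsto_id).cauchySeq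
    δ hδ
  have hint : ∀ x ≥ a, IntervalIntegrable f volume a x := fun x hx =>
    (hf.mono_set (by rw [uIcc_of_le hx]; exact Icc_subset_Ici_self)).intervalIntegrable
  filter_upwards [eventually_ge_atTop (max N a)] with T hT u hu v hv
  obtain ⟨hNT, haT⟩ := max_le_iff.1 hT
  rw [← intervalIntegral.integral_interval_sub_left (hint v (haT.trans hv))
    (hint u (haT.trans hu)), ← Real.dist_eq]
  exact hN v (hNT.trans hv) u (hNT.trans hu)

lemma tendsto_inv_mul_nhds_zero_of_abs_le {α : Type*} {l : Filter α} {g φ : α → ℝ}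
    (hφ : Tendsto φ l atTop) (h : ∀ δ > 0, ∃ C, ∀ᶠ x in l, |g x| ≤ C + δ * φ x) :
    Tendsto (fun x => (φ x)⁻¹ * g x) l (𝓝 0) := by
  rw [Metric.tendsto_nhds]
  intro ε hε
  obtain ⟨C, hC⟩ := h (ε / 2) (half_pos hε)
  filter_upwards [hC, hφ.eventually_gt_atTop (max 0 (2 * C / ε))] with x hgx hφx
  have hφpos : 0 < φ x := (le_max_left _ _).trans_lt hφx
  have hCφ : C < ε / 2 * φ x := by
    have := (le_max_right _ _).trans_lt hφx
    rw [div_lt_iff₀ hε] at this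
    linarith
  rw [dist_zero_right, norm_mul, norm_inv, Real.norm_eq_abs, Real.norm_eq_abs,
    abs_of_pos hφpos, inv_mul_lt_iff₀ hφpos]
  linarith

theorem kronecker_continuous_general (t0 : ℝ) (f φ : ℝ → ℝ)
    (hfint : IntegrableOn f (Set.Ici t0))
    (hφmono : MonotoneOn φ (Set.Ici t0))
    (hφtop : Tendsto φ atTop atTop) :
    Tendsto (fun t => (φ t)⁻¹ * ∫ s in t0..t, φ s * f s) atTop (nhds 0) := by
  refine tendsto_inv_mul_nhds_zero_of_abs_le hφtop fun δ hδ => ?_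
  obtain ⟨T, htail, hT, hφT⟩ :=
    ((IntegrableOn.eventually_forall_abs_intervalIntegral_lt hfint hδ).and
      ((eventually_ge_atTop t0).and (hφtop.eventually_ge_atTop 0))).exists
  have hint : ∀ u v, t0 ≤ u → t0 ≤ v → IntervalIntegrable (fun s => φ s * f s) volume u v := by
    intro u v hu hv
    have hsub : uIcc u v ⊆ Ici t0 := fun x hx => (le_inf hu hv).trans hx.1
    exact (hφmono.mono hsub).intervalIntegrable_mul (hfint.mono_set hsub)
  refine ⟨|∫ s in t0..T, φ s * f s|, ?_⟩
  filter_upwards [eventually_ge_atTop T] with t ht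
  have hTt : |∫ s in T..t, φ s * f s| ≤ δ * φ t :=
    abs_intervalIntegral_mul_le_of_monotoneOn (hφmono.mono fun x hx => hT.trans hx.1) hφT ht
      (hfint.mono_set fun x hx => hT.trans hx.1.le) fun u hu => (htail u hu.1 t ht).le
  rw [← intervalIntegral.integral_add_adjacent_intervals (hint t0 T le_rfl hT)
    (hint T t hT (hT.trans ht))]
  exact (abs_add_le _ _).trans (add_le_add_right hTt _)

/-- Continuous-time Kronecker lemma: if `f` is continuous and integrable on `[t0, ∞)` and
`φ` is nonnegative, nondecreasing and tends to `+∞`, then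
`(1/φ(t)) ∫_{t0}^t φ(s) f(s) ds → 0` as `t → ∞`. -/
theorem kronecker_continuous (t0 : ℝ) (f φ : ℝ → ℝ)
    (ht0 : 0 < t0)
    (hfc : ContinuousOn f (Set.Ici t0))
    (hfint : IntegrableOn f (Set.Ici t0))
    (hφ0 : ∀ t, t0 ≤ t → 0 ≤ φ t)
    (hφmono : MonotoneOn φ (Set.Ici t0))
    (hφtop : Tendsto φ atTop atTop) :
    Tendsto (fun t => (φ t)⁻¹ * ∫ s in t0..t, φ s * f s) atTop (nhds 0) :=
  kronecker_continuous_general t0 f φ hfint hφmono hφtop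
end
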